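/- arXiv:2203.07730 — 8 statements merged into one kernel-verified Lean document; each statement's English description precedes it below -/
import Mathlib

section
/- Let Γ = (A, B, E) be a locally finite bipartite graph and k ≥ 1 a natural number. Then Γ has a perfect (1,k)-matching if and only if for all finite subsets X ⊆ A and Y ⊆ B, |N(X)| ≥ k·|X| and |N(Y)| ≥ (1/k)·|Y|. -/
theorem csb_edge {α β : Type*} {f : α → β} {g : β → α} (hf : Function.Injective f)
    (hg : Function.Injective g) :
    ∃ h : α → β, Function.Bijective h ∧ ∀ a, h a = f a ∨ g (h a) = a := by
  classical
  rcases isEmpty_or_nonempty α with hα | hα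
  · have hβ : IsEmpty β := ⟨fun b => hα.false (g b)⟩
    exact ⟨fun a => (hα.false a).elim,
      ⟨fun a => (hα.false a).elim, fun b => (hβ.false b).elim⟩, fun a => (hα.false a).elim⟩
  have hβ : Nonempty β := ⟨f (Classical.arbitrary α)⟩
  let C : ℕ → Set α := fun n => Nat.rec (Set.range g)ᶜ (fun _ Cn => g '' (f '' Cn)) n
  set S : Set α := ⋃ n, C n with hS
  have hnotS : ∀ a ∉ S, a ∈ Set.range g := by
    intro a ha
    by_contra hmem
    exact ha (Set.mem_iUnion.2 ⟨0, hmem⟩)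
  have hginv : ∀ a ∉ S, g (Function.invFun g a) = a := fun a ha =>
    Function.invFun_eq (hnotS a ha)
  have hstep : ∀ a ∈ S, g (f a) ∈ S := by
    intro a ha
    obtain ⟨n, hn⟩ := Set.mem_iUnion.1 ha
    exact Set.mem_iUnion.2 ⟨n + 1, ⟨f a, ⟨a, hn, rfl⟩, rfl⟩⟩
  refine ⟨fun a => if a ∈ S then f a else Function.invFun g a, ⟨?_, ?_⟩, ?_⟩
  · intro a a' heq
    by_cases ha : a ∈ S <;> by_cases ha' : a' ∈ S <;>
      simp only [ha, ha', if_pos, if_neg, if_true, if_false] at heq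
    · exact hf heq
    · exfalso
      have : g (f a) = a' := by rw [heq]; exact hginv a' ha'
      exact ha' (this ▸ hstep a ha)
    · exfalso
      have : g (f a') = a := by rw [← heq]; exact hginv a ha
      exact ha (this ▸ hstep a' ha')
    · have := congrArg g heq
      rwa [hginv a ha, hginv a' ha'] at this
  · intro b
    by_cases hb : g b ∈ S
    · obtain ⟨n, hn⟩ := Set.mem_iUnion.1 hb
      cases n with
      | zero => exact absurd ⟨b, rfl⟩ hn
      | succ m =>
        obtain ⟨y, ⟨a, haC, rfl⟩, hgy⟩ := hn
        have hfa : f a = b := hg hgy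
        have haS : a ∈ S := Set.mem_iUnion.2 ⟨m, haC⟩
        exact ⟨a, by dsimp only; rw [if_pos haS, hfa]⟩
    · exact ⟨g b, by dsimp only; rw [if_neg hb, Function.leftInverse_invFun hg b]⟩
  · intro a
    by_cases ha : a ∈ S
    · left; dsimp only; rw [if_pos ha]
    · right; dsimp only; rw [if_neg ha]; exact hginv a ha

/-- Hall's harem theorem: a locally finite bipartite graph `Γ = (A,B,E)` has a
perfect `(1,k)`-matching iff for all finite `X ⊆ A`, `|N(X)| ≥ k|X|`, and
for all finite `Y ⊆ B`, `|N(Y)| ≥ |Y|/k`. -/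
theorem hall_harem {A B : Type*} (E : A → B → Prop) (k : ℕ) (hk : 1 ≤ k)
    (hlocA : ∀ a : A, {b | E a b}.Finite) (hlocB : ∀ b : B, {a | E a b}.Finite) :
    (∃ M : A → B → Prop, (∀ a b, M a b → E a b) ∧
        (∀ a : A, {b | M a b}.ncard = k) ∧ (∀ b : B, ∃! a : A, M a b)) ↔
      ((∀ X : Finset A, k * X.card ≤ {b | ∃ a ∈ X, E a b}.ncard) ∧
       (∀ Y : Finset B, Y.card ≤ k * {a | ∃ b ∈ Y, E a b}.ncard)) := by
  constructor
  · rintro ⟨M, hM1, hM2, hM3⟩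
    classical
    have hMfin : ∀ a, {b | M a b}.Finite := fun a =>
      (hlocA a).subset (fun b hb => hM1 a b hb)
    constructor
    · intro X
      set T : Set B := {b | ∃ a ∈ X, E a b} with hT
      have hTfin : T.Finite := by
        have : T = ⋃ a ∈ (X : Set A), {b | E a b} := by ext b; simp [hT]
        rw [this]
        exact Set.Finite.biUnion X.finite_toSet (fun a _ => hlocA a)
      set Fa : A → Finset B := fun a => (hMfin a).toFinset with hFa
      have hFacard : ∀ a, (Fa a).card = k := by
        intro a
        rw [hFa]; dsimp only
        rw [← Set.ncard_eq_toFinset_card _ (hMfin a)]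
        exact hM2 a
      have hdisj : ∀ a ∈ X, ∀ a' ∈ X, a ≠ a' → Disjoint (Fa a) (Fa a') := by
        intro a _ a' _ hne
        rw [Finset.disjoint_left]
        intro b hb hb'
        simp only [hFa, Set.Finite.mem_toFinset, Set.mem_setOf_eq] at hb hb'
        exact hne ((hM3 b).unique hb hb')
      have hsub : X.biUnion Fa ⊆ hTfin.toFinset := by
        intro b hb
        obtain ⟨a, ha, hab⟩ := Finset.mem_biUnion.1 hb
        simp only [hFa, Set.Finite.mem_toFinset, Set.mem_setOf_eq] at hab ⊢
        exact ⟨a, ha, hM1 a b hab⟩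
      calc k * X.card = ∑ a ∈ X, (Fa a).card := by
            simp [hFacard, mul_comm]
        _ = (X.biUnion Fa).card := (Finset.card_biUnion hdisj).symm
        _ ≤ hTfin.toFinset.card := Finset.card_le_card hsub
        _ = T.ncard := (Set.ncard_eq_toFinset_card T hTfin).symm
    · intro Y
      set T : Set A := {a | ∃ b ∈ Y, E a b} with hT
      have hTfin : T.Finite := by
        have : T = ⋃ b ∈ (Y : Set B), {a | E a b} := by ext a; simp [hT]
        rw [this]
        exact Set.Finite.biUnion Y.finite_toSet (fun b _ => hlocB b)
      set φ : B → A := fun b => (hM3 b).exists.choose with hφ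
      have hφM : ∀ b, M (φ b) b := fun b => (hM3 b).exists.choose_spec
      have himg : Y.image φ ⊆ hTfin.toFinset := by
        intro a ha
        obtain ⟨b, hb, rfl⟩ := Finset.mem_image.1 ha
        simp only [Set.Finite.mem_toFinset, hT, Set.mem_setOf_eq]
        exact ⟨b, hb, hM1 _ b (hφM b)⟩
      have hfib : ∀ a ∈ Y.image φ, (Y.filter fun b => φ b = a).card ≤ k := by
        intro a _
        have hsub : (Y.filter fun b => φ b = a) ⊆ (hMfin a).toFinset := by
          intro b hb
          obtain ⟨_, hba⟩ := Finset.mem_filter.1 hb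
          simp only [Set.Finite.mem_toFinset, Set.mem_setOf_eq]
          exact hba ▸ hφM b
        calc (Y.filter fun b => φ b = a).card ≤ (hMfin a).toFinset.card :=
              Finset.card_le_card hsub
          _ = k := by rw [← Set.ncard_eq_toFinset_card _ (hMfin a)]; exact hM2 a
      calc Y.card ≤ k * (Y.image φ).card := Finset.card_le_mul_card_image Y k hfib
        _ ≤ k * hTfin.toFinset.card := Nat.mul_le_mul_left k (Finset.card_le_card himg)
        _ = k * T.ncard := by rw [Set.ncard_eq_toFinset_card T hTfin]
  · rintro ⟨h1, h2⟩
    classical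
    have hallA : ∀ s : Finset (A × Fin k), s.card ≤
        (s.biUnion (fun p : A × Fin k => (hlocA p.1).toFinset)).card := by
      intro s
      set X := s.image Prod.fst with hX
      have hU : s.biUnion (fun p : A × Fin k => (hlocA p.1).toFinset)
          = X.biUnion fun a => (hlocA a).toFinset := by
        ext b
        simp only [Finset.mem_biUnion, hX, Finset.mem_image]
        constructor
        · rintro ⟨p, hp, hb⟩; exact ⟨p.1, ⟨p, hp, rfl⟩, hb⟩
        · rintro ⟨a, ⟨p, hp, rfl⟩, hb⟩; exact ⟨p, hp, hb⟩
      have hsub : s ⊆ X ×ˢ (Finset.univ : Finset (Fin k)) := by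
        intro p hp
        rw [Finset.mem_product]
        exact ⟨Finset.mem_image_of_mem _ hp, Finset.mem_univ _⟩
      have hcard : s.card ≤ k * X.card := by
        calc s.card ≤ (X ×ˢ (Finset.univ : Finset (Fin k))).card := Finset.card_le_card hsub
          _ = X.card * k := by rw [Finset.card_product, Finset.card_univ, Fintype.card_fin]
          _ = k * X.card := mul_comm _ _
      have hset : {b | ∃ a ∈ X, E a b} = ↑(X.biUnion fun a => (hlocA a).toFinset) := by
        ext b; simp [Set.Finite.mem_toFinset]
      have := h1 X
      rw [hset, Set.ncard_coe_finset] at this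
      rw [hU]
      exact hcard.trans this
    have hallB : ∀ s : Finset B, s.card ≤
        (s.biUnion (fun b : B =>
          (hlocB b).toFinset ×ˢ (Finset.univ : Finset (Fin k)))).card := by
      intro s
      have hU : s.biUnion (fun b => (hlocB b).toFinset ×ˢ (Finset.univ : Finset (Fin k)))
          = (s.biUnion fun b => (hlocB b).toFinset) ×ˢ (Finset.univ : Finset (Fin k)) := by
        ext ⟨a, i⟩
        simp [Finset.mem_biUnion, Finset.mem_product]
      rw [hU, Finset.card_product, Finset.card_univ, Fintype.card_fin]
      have hset : {a | ∃ b ∈ s, E a b} = ↑(s.biUnion fun b => (hlocB b).toFinset) := by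
        ext a; simp [Set.Finite.mem_toFinset]
      have := h2 s
      rwa [hset, Set.ncard_coe_finset, mul_comm] at this
    obtain ⟨f, hfinj, hfmem⟩ := (Finset.all_card_le_biUnion_card_iff_exists_injective
        (fun p : A × Fin k => (hlocA p.1).toFinset)).1 hallA
    obtain ⟨g, hginj, hgmem⟩ := (Finset.all_card_le_biUnion_card_iff_exists_injective
        (fun b : B => (hlocB b).toFinset ×ˢ (Finset.univ : Finset (Fin k)))).1 hallB
    have hfE : ∀ p : A × Fin k, E p.1 (f p) := fun p => by
      have := hfmem p
      rwa [Set.Finite.mem_toFinset] at this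
    have hgE : ∀ b : B, E (g b).1 b := fun b => by
      have := hgmem b
      rw [Finset.mem_product] at this
      have := this.1
      rwa [Set.Finite.mem_toFinset] at this
    obtain ⟨h, hbij, hedge⟩ := csb_edge hfinj hginj
    refine ⟨fun a b => ∃ i : Fin k, h (a, i) = b, ?_, ?_, ?_⟩
    · rintro a b ⟨i, rfl⟩
      rcases hedge (a, i) with he | he
      · rw [he]; exact hfE (a, i)
      · have := hgE (h (a, i))
        rwa [he] at this
    · intro a
      have : {b | ∃ i : Fin k, h (a, i) = b} = (fun i : Fin k => h (a, i)) '' Set.univ := by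
        ext b; simp [eq_comm]
      rw [this, Set.ncard_image_of_injective _ (fun i j hij => by
        have := hbij.injective hij; exact (Prod.mk.injEq a i a j ▸ this).2),
        Set.ncard_univ, Nat.card_eq_fintype_card, Fintype.card_fin]
    · intro b
      obtain ⟨⟨a, i⟩, rfl⟩ := hbij.surjective b
      refine ⟨a, ⟨i, rfl⟩, ?_⟩
      rintro a' ⟨i', hi'⟩
      exact (Prod.mk.injEq _ _ _ _ ▸ hbij.injective hi').1
end

section
/- Let Γ = (A, B, E) be a locally finite bipartite graph with a perfect (1,k)-matching, let a₀ ∈ A, and let M₀ be the set of k edges of the matching adjacent to a₀. Let Γ' be the graph obtained from Γ by deleting a₀ and its k matched partners (and all edges adjacent to them). Then Γ' still satisfies Hall's k-harem condition: for every finite X ⊆ A', |N_{Γ'}(X)| ≥ k·|X|, and for every finite Y ⊆ B', |N_{Γ'}(Y)| ≥ (1/k)·|Y|. -/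
/-- If `M` is a perfect `(1,k)`-matching of a locally finite bipartite graph
`Γ = (A,B,E)` and `a₀ ∈ A`, then the graph `Γ'` obtained by deleting `a₀` and its
`k` matched partners still satisfies Hall's `k`-harem condition. -/
theorem harem_condition_after_removal {A B : Type*} (E : A → B → Prop) (k : ℕ) (hk : 1 ≤ k)
    (hlocA : ∀ a : A, {b | E a b}.Finite) (hlocB : ∀ b : B, {a | E a b}.Finite)
    (M : A → B → Prop) (hME : ∀ a b, M a b → E a b)
    (hMA : ∀ a : A, {b | M a b}.ncard = k) (hMB : ∀ b : B, ∃! a : A, M a b)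
    (a₀ : A) :
    (∀ X : Finset A, a₀ ∉ X →
        k * X.card ≤ {b | ¬ M a₀ b ∧ ∃ a ∈ X, E a b}.ncard) ∧
    (∀ Y : Finset B, (∀ b ∈ Y, ¬ M a₀ b) →
        Y.card ≤ k * {a | a ≠ a₀ ∧ ∃ b ∈ Y, E a b}.ncard) := by
  classical
  have hMfin : ∀ a : A, {b | M a b}.Finite := by
    intro a
    apply Set.finite_of_ncard_ne_zero
    rw [hMA a]; omega
  constructor
  · intro X hX
    set T : Finset B := X.biUnion (fun a => (hMfin a).toFinset) with hT
    have hTcard : T.card = k * X.card := by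
      rw [Finset.card_biUnion]
      · rw [Finset.sum_congr rfl (fun a _ => ?_), Finset.sum_const, smul_eq_mul,
          Nat.mul_comm]
        rw [← Set.ncard_eq_toFinset_card _ (hMfin a), hMA a]
      · intro a _ a' _ hne
        simp only [Finset.disjoint_left, Set.Finite.mem_toFinset, Set.mem_setOf_eq]
        intro b hb hb'
        exact hne ((hMB b).unique hb hb')
    have hsub : (↑T : Set B) ⊆ {b | ¬ M a₀ b ∧ ∃ a ∈ X, E a b} := by
      intro b hb
      simp only [hT, Finset.coe_biUnion, Set.mem_iUnion, Finset.mem_coe,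
        Set.Finite.coe_toFinset, Set.mem_setOf_eq] at hb
      obtain ⟨a, haX, hab⟩ := hb
      refine ⟨fun h => hX ?_, a, haX, hME a b hab⟩
      rwa [← (hMB b).unique hab h]
    have hfin : {b | ¬ M a₀ b ∧ ∃ a ∈ X, E a b}.Finite := by
      apply Set.Finite.subset (Set.Finite.biUnion X.finite_toSet (fun a _ => hlocA a))
      rintro b ⟨_, a, haX, hab⟩
      exact Set.mem_biUnion haX hab
    calc k * X.card = (↑T : Set B).ncard := by rw [Set.ncard_coe_finset, hTcard]
      _ ≤ _ := Set.ncard_le_ncard hsub hfin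
  · intro Y hY
    choose f hf using fun b => (hMB b).exists
    have hfY : ∀ b ∈ Y, f b ∈ {a | a ≠ a₀ ∧ ∃ b ∈ Y, E a b} := by
      intro b hb
      refine ⟨fun h => hY b hb (h ▸ hf b), b, hb, hME _ _ (hf b)⟩
    have hfin : {a | a ≠ a₀ ∧ ∃ b ∈ Y, E a b}.Finite := by
      apply Set.Finite.subset (Set.Finite.biUnion Y.finite_toSet (fun b _ => hlocB b))
      rintro a ⟨_, b, hbY, hab⟩
      exact Set.mem_biUnion hbY hab
    have h1 : Y.card ≤ k * (Y.image f).card := by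
      apply Finset.card_le_mul_card_image
      intro a _
      have : (↑(Y.filter fun b => f b = a) : Set B) ⊆ {b | M a b} := by
        intro b hb
        simp only [Finset.coe_filter, Set.mem_setOf_eq] at hb
        exact hb.2 ▸ hf b
      calc (Y.filter fun b => f b = a).card
          = (↑(Y.filter fun b => f b = a) : Set B).ncard := (Set.ncard_coe_finset _).symm
        _ ≤ {b | M a b}.ncard := Set.ncard_le_ncard this (hMfin a)
        _ = k := hMA a
    have h2 : (Y.image f).card ≤ {a | a ≠ a₀ ∧ ∃ b ∈ Y, E a b}.ncard := by
      rw [← Set.ncard_coe_finset]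
      apply Set.ncard_le_ncard _ hfin
      intro a ha
      simp only [Finset.coe_image, Set.mem_image, Finset.mem_coe] at ha
      obtain ⟨b, hbY, rfl⟩ := ha
      exact hfY b hbY
    calc Y.card ≤ k * (Y.image f).card := h1
      _ ≤ _ := Nat.mul_le_mul_left k h2
end

section
/- Let Γ = (A, B, E) be a bipartite graph admitting a witness function h for the expanding Hall harem condition with respect to k, i.e., h(0) = 0 and for all finite X ⊆ A, h(n) ≤ |X| implies n ≤ |N(X)| − k|X|, and for all finite Y ⊆ B, h(n) ≤ |Y| implies n ≤ |N(Y)| − |Y|/k. Suppose M₀ is the star of a left vertex a₀ in some perfect (1,k)-matching restricted suitably, and Γ' is Γ with a₀ and its k matched partners removed. Then for every finite X ⊆ A' with |X| ≥ h(n+k) (n ≥ 1), one has n ≤ |N_{Γ'}(X)| − k|X|. -/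
/-- Let `Γ = (A,B,E)` satisfy the expanding Hall harem condition with witness `h`,
let `M` be a perfect `(1,k)`-matching and `a₀ ∈ A`. After removing `a₀` and its `k`
matched partners, for every finite `X ⊆ A'` with `h(n+k) ≤ |X|` (where `n ≥ 1`),
one has `n ≤ |N_{Γ'}(X)| - k|X|`. -/
theorem expanding_hall_after_removal {A B : Type*} (E : A → B → Prop) (k : ℕ) (hk : 1 ≤ k)
    (h : ℕ → ℕ) (h0 : h 0 = 0)
    (hA : ∀ (X : Finset A) (n : ℕ), h n ≤ X.card →
        n + k * X.card ≤ {b | ∃ a ∈ X, E a b}.ncard)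
    (hB : ∀ (Y : Finset B) (n : ℕ), h n ≤ Y.card →
        k * n + Y.card ≤ k * {a | ∃ b ∈ Y, E a b}.ncard)
    (M : A → B → Prop) (hME : ∀ a b, M a b → E a b)
    (hMA : ∀ a : A, {b | M a b}.ncard = k) (hMB : ∀ b : B, ∃! a : A, M a b)
    (a₀ : A) :
    ∀ (X : Finset A) (n : ℕ), 1 ≤ n → a₀ ∉ X → h (n + k) ≤ X.card →
      n + k * X.card ≤ {b | ¬ M a₀ b ∧ ∃ a ∈ X, E a b}.ncard := by
  intro X n hn ha0 hcard
  set N : Set B := {b | ∃ a ∈ X, E a b} with hN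
  set T : Set B := {b | M a₀ b} with hT
  set S : Set B := {b | ¬ M a₀ b ∧ ∃ a ∈ X, E a b} with hS
  have key : n + k + k * X.card ≤ N.ncard := hA X (n + k) hcard
  have hTfin : T.Finite := by
    by_contra hinf
    have := hMA a₀
    rw [Set.Infinite.ncard hinf] at this
    omega
  have hNfin : N.Finite := by
    by_contra hinf
    rw [Set.Infinite.ncard hinf] at key
    omega
  have hSsub : S ⊆ N := fun b hb => hb.2
  have hSfin : S.Finite := hNfin.subset hSsub
  have hsub : N ⊆ S ∪ T := by
    intro b hb
    by_cases hb' : M a₀ b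
    · exact Or.inr hb'
    · exact Or.inl ⟨hb', hb⟩
  have h1 : N.ncard ≤ (S ∪ T).ncard := Set.ncard_le_ncard hsub (hSfin.union hTfin)
  have h2 : (S ∪ T).ncard ≤ S.ncard + T.ncard := Set.ncard_union_le S T
  have h3 := hMA a₀
  rw [← hT] at h3
  omega
end

section
/- Let a group G act on a set X, let K ⊆ G be finite, and suppose there is a surjective 2-to-1 map φ : X → X such that for every x ∈ X there is g ∈ K with x = g · φ(x). Then X admits a paradoxical decomposition with respect to K: there exist families (A_k)_{k∈K} and (B_k)_{k∈K} of subsets of X such that X = ⊔_{k∈K} A_k = ⊔_{k∈K} B_k and X = (⊔_{k∈K} k·A_k) ⊔ (⊔_{k∈K} k·B_k). -/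
open Pointwise

/-- `(K, A, B)` is a paradoxical decomposition of the `G`-space `X`:
`X = ⊔_{k∈K} A_k = ⊔_{k∈K} B_k = (⊔_{k∈K} k·A_k) ⊔ (⊔_{k∈K} k·B_k)`. -/
def ParadoxicalDecomposition {G X : Type*} [Group G] [MulAction G X]
    (K : Set G) (A B : G → Set X) : Prop :=
  (∀ x : X, ∃! k : G, k ∈ K ∧ x ∈ A k) ∧
  (∀ x : X, ∃! k : G, k ∈ K ∧ x ∈ B k) ∧
  (∀ x : X, ∃! p : G × Bool, p.1 ∈ K ∧
    x ∈ (if p.2 then p.1 • A p.1 else p.1 • B p.1))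

/-- If a group `G` acts on `X`, `K ⊆ G` is finite, and there is a surjective 2-to-1 map
`φ : X → X` such that every `x` satisfies `x = g • φ x` for some `g ∈ K`, then `X`
admits a paradoxical decomposition with respect to `K`. -/
theorem paradoxical_of_two_to_one {G X : Type*} [Group G] [MulAction G X]
    (K : Finset G) (φ : X → X) (hsurj : Function.Surjective φ)
    (hfib : ∀ x : X, ∃ a b : X, a ≠ b ∧ φ ⁻¹' {x} = {a, b})
    (hK : ∀ x : X, ∃ g ∈ K, x = g • φ x) :
    ∃ A B : G → Set X, ParadoxicalDecomposition (K : Set G) A B := by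
  choose a b hab hfib' using hfib
  choose c hcK hc using hK
  have hφa : ∀ x, φ (a x) = x := by
    intro x
    have : a x ∈ φ ⁻¹' {x} := by rw [hfib' x]; exact Or.inl rfl
    simpa using this
  have hφb : ∀ x, φ (b x) = x := by
    intro x
    have : b x ∈ φ ⁻¹' {x} := by rw [hfib' x]; exact Or.inr rfl
    simpa using this
  have hmem : ∀ y : X, y = a (φ y) ∨ y = b (φ y) := by
    intro y
    have : y ∈ φ ⁻¹' {φ y} := rfl
    rwa [hfib' (φ y)] at this
  have ha_eq : ∀ y, a y = c (a y) • y := by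
    intro y; conv_lhs => rw [hc (a y)]
    rw [hφa]
  have hb_eq : ∀ y, b y = c (b y) • y := by
    intro y; conv_lhs => rw [hc (b y)]
    rw [hφb]
  refine ⟨fun k => {y | c (a y) = k}, fun k => {y | c (b y) = k}, ?_, ?_, ?_⟩
  · intro x
    exact ⟨c (a x), ⟨by simpa using hcK (a x), rfl⟩, fun k hk => hk.2.symm⟩
  · intro x
    exact ⟨c (b x), ⟨by simpa using hcK (b x), rfl⟩, fun k hk => hk.2.symm⟩
  · intro x
    have memA : ∀ k : G, x ∈ k • {y | c (a y) = k} ↔ x = a (φ x) ∧ k = c x := by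
      intro k
      constructor
      · rintro ⟨y, (hy : c (a y) = k), rfl⟩
        have hx : a y = k • y := by rw [ha_eq y, hy]
        have hy' : φ (k • y) = y := by rw [← hx, hφa]
        refine ⟨?_, ?_⟩
        · show k • y = a (φ (k • y)); rw [hy', ← hx]
        · show k = c (k • y); rw [← hx]; exact hy.symm
      · rintro ⟨hx, rfl⟩
        refine ⟨φ x, ?_, ?_⟩
        · show c (a (φ x)) = c x; rw [← hx]
        · show c x • φ x = x; exact (hc x).symm
    have memB : ∀ k : G, x ∈ k • {y | c (b y) = k} ↔ x = b (φ x) ∧ k = c x := by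
      intro k
      constructor
      · rintro ⟨y, (hy : c (b y) = k), rfl⟩
        have hx : b y = k • y := by rw [hb_eq y, hy]
        have hy' : φ (k • y) = y := by rw [← hx, hφb]
        refine ⟨?_, ?_⟩
        · show k • y = b (φ (k • y)); rw [hy', ← hx]
        · show k = c (k • y); rw [← hx]; exact hy.symm
      · rintro ⟨hx, rfl⟩
        refine ⟨φ x, ?_, ?_⟩
        · show c (b (φ x)) = c x; rw [← hx]
        · show c x • φ x = x; exact (hc x).symm
    have hne : ¬ (x = a (φ x) ∧ x = b (φ x)) := by
      rintro ⟨h1, h2⟩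
      exact hab (φ x) (h1 ▸ h2 ▸ rfl)
    rcases hmem x with hx | hx
    · refine ⟨(c x, true), ⟨by simpa using hcK x,
        by simpa using (memA (c x)).mpr ⟨hx, rfl⟩⟩, ?_⟩
      rintro ⟨k, (_ | _)⟩ ⟨hk1, hk2⟩
      · replace hk2 : x ∈ k • {y | c (b y) = k} := hk2
        rw [memB] at hk2
        exact absurd ⟨hx, hk2.1⟩ hne
      · replace hk2 : x ∈ k • {y | c (a y) = k} := hk2
        rw [memA] at hk2
        simp [hk2.2]
    · refine ⟨(c x, false), ⟨by simpa using hcK x,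
        by simpa using (memB (c x)).mpr ⟨hx, rfl⟩⟩, ?_⟩
      rintro ⟨k, (_ | _)⟩ ⟨hk1, hk2⟩
      · replace hk2 : x ∈ k • {y | c (b y) = k} := hk2
        rw [memB] at hk2
        simp [hk2.2]
      · replace hk2 : x ∈ k • {y | c (a y) = k} := hk2
        rw [memA] at hk2
        exact absurd ⟨hk2.1, hx⟩ hne
end

section
/- Let a group G act on a set X such that the G-space (G,X) does not satisfy the Følner condition: there exist a finite set K₀ ⊆ G and n ∈ ℕ such that for every finite nonempty F ⊆ X there is k ∈ K₀ with |F \ k·F| ≥ |F|/n. Then X admits a paradoxical decomposition with respect to K = (K₀ ∪ K₀⁻¹ ∪ {1})^{n₁}, where n₁ satisfies (1 + 1/n)^{n₁} ≥ 3. -/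
/-!
If the Følner condition fails, every finite `F ⊆ X` grows by a factor `1 + 1/n` under
`S = K₀ ∪ {1}`, so `T = S ^ n₁` at least triples it. Hall's theorem then gives an injection
`X × Bool → X` moving each point within its `T`-orbit, and Schröder–Bernstein against the
inclusion `y ↦ (y, false)` (which moves points by `1 ∈ T`) turns it into a bijection `h` of the
same kind. The pieces `A k`, `B k` collect the points that `h` moves by `k` from the first,
resp. second, copy of `X`.
-/

open Pointwise

section

open Finset Function

variable {G X : Type*} [Group G] [MulAction G X]

section Growth

variable [DecidableEq G] [DecidableEq X] {n : ℕ}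

theorem succ_mul_card_le_mul_card_smul {K₀ : Finset G}
    (hfol : ∀ F : Set X, F.Finite → F.Nonempty → ∃ k ∈ K₀, F.ncard ≤ n * (F \ k • F).ncard)
    (F : Finset X) : (n + 1) * #F ≤ n * #((K₀ ∪ {1}) • F) := by
  obtain rfl | hne := F.eq_empty_or_nonempty
  · simp
  obtain ⟨k, hk, hcard⟩ := hfol (F : Set X) F.finite_toSet (by exact_mod_cast hne)
  rw [← coe_smul_finset, ← coe_sdiff, Set.ncard_coe_finset, Set.ncard_coe_finset] at hcard
  have hsub : F ∪ k • F ⊆ (K₀ ∪ {1}) • F := by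
    rw [union_smul, singleton_smul, one_smul, union_comm]
    exact union_subset_union_left (smul_finset_subset_smul hk)
  calc (n + 1) * #F ≤ n * #(F \ k • F) + n * #F := by linarith
    _ = n * #(F ∪ k • F) := by rw [← mul_add, ← card_smul_finset k F, card_sdiff_add_card]
    _ ≤ n * #((K₀ ∪ {1}) • F) := Nat.mul_le_mul_left _ (card_le_card hsub)

theorem succ_pow_mul_card_le_pow_mul_card_pow_smul {S : Finset G}
    (hS : ∀ F : Finset X, (n + 1) * #F ≤ n * #(S • F)) (m : ℕ) (F : Finset X) :
    (n + 1) ^ m * #F ≤ n ^ m * #(S ^ m • F) := by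
  induction m with
  | zero => simp
  | succ m ih =>
    calc (n + 1) ^ (m + 1) * #F = (n + 1) * ((n + 1) ^ m * #F) := by ring
      _ ≤ (n + 1) * (n ^ m * #(S ^ m • F)) := Nat.mul_le_mul_left _ ih
      _ = n ^ m * ((n + 1) * #(S ^ m • F)) := by ring
      _ ≤ n ^ m * (n * #(S • S ^ m • F)) := Nat.mul_le_mul_left _ (hS _)
      _ = n ^ (m + 1) * #(S ^ (m + 1) • F) := by rw [pow_succ' S, mul_smul]; ring

end Growth

theorem exists_bijective_smul_of_two_mul_card_le [DecidableEq X] {T : Finset G} (h1 : 1 ∈ T)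
    (hT : ∀ F : Finset X, 2 * #F ≤ #(T • F)) :
    ∃ h : X × Bool → X, Bijective h ∧ ∀ p, ∃ k ∈ T, h p = k • p.1 := by
  have hall : ∀ s : Finset (X × Bool), #s ≤ #(s.biUnion fun p => T.image (· • p.1)) := by
    intro s
    have hsub : T • s.image Prod.fst ⊆ s.biUnion fun p => T.image (· • p.1) := by
      rintro _ hx
      obtain ⟨k, hk, _, hy, rfl⟩ := mem_smul.1 hx
      obtain ⟨p, hp, rfl⟩ := mem_image.1 hy
      exact mem_biUnion.2 ⟨p, hp, mem_image_of_mem _ hk⟩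
    calc #s ≤ #(s.image Prod.fst ×ˢ (univ : Finset Bool)) :=
          card_le_card fun p hp => mem_product.2 ⟨mem_image_of_mem _ hp, mem_univ _⟩
      _ = 2 * #(s.image Prod.fst) := by rw [card_product, card_univ, Fintype.card_bool, mul_comm]
      _ ≤ _ := (hT _).trans (card_le_card hsub)
  obtain ⟨f, hf, hfT⟩ := (all_card_le_biUnion_card_iff_exists_injective _).1 hall
  refine Embedding.schroeder_bernstein_of_rel hf (g := fun y => (y, false))
    (fun _ _ h => congrArg Prod.fst h) (fun p x => ∃ k ∈ T, x = k • p.1) ?_ ?_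
  · intro p
    obtain ⟨k, hk, hkp⟩ := mem_image.1 (hfT p)
    exact ⟨k, hk, hkp.symm⟩
  · exact fun y => ⟨1, h1, (one_smul G y).symm⟩

theorem ParadoxicalDecomposition.exists_of_bijective {K : Set G} {h : X × Bool → X}
    (hh : Bijective h) (hK : ∀ p, ∃ k ∈ K, h p = k • p.1) :
    ∃ A B : G → Set X, ParadoxicalDecomposition K A B := by
  choose c hcK hc using hK
  have mem_iff (x : X) (q : G × Bool) :
      x ∈ (if q.2 then q.1 • {y | c (y, true) = q.1} else q.1 • {y | c (y, false) = q.1}) ↔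
        c (q.1⁻¹ • x, q.2) = q.1 := by
    obtain ⟨k, _ | _⟩ := q <;> simp [Set.mem_smul_set_iff_inv_smul_mem]
  refine ⟨fun k => {y | c (y, true) = k}, fun k => {y | c (y, false) = k},
    fun x => ⟨c (x, true), ⟨hcK _, rfl⟩, fun k hk => hk.2.symm⟩,
    fun x => ⟨c (x, false), ⟨hcK _, rfl⟩, fun k hk => hk.2.symm⟩, fun x => ?_⟩
  -- the pieces containing `x` correspond to the preimages of `x` under `h`
  obtain ⟨⟨y, i⟩, rfl⟩ := hh.2 x
  refine ⟨(c (y, i), i), ⟨hcK _, (mem_iff _ _).2 ?_⟩, ?_⟩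
  · rw [hc, inv_smul_smul]
  · rintro ⟨k, j⟩ ⟨-, hk⟩
    replace hk : c (k⁻¹ • h (y, i), j) = k := (mem_iff _ (k, j)).1 hk
    have hpre : (k⁻¹ • h (y, i), j) = (y, i) := hh.1 (by rw [hc, hk, smul_inv_smul])
    obtain ⟨hy, rfl⟩ := Prod.mk.inj hpre
    rw [hy] at hk
    rw [hk]

end

/-- If the `G`-space `X` fails the Følner condition, witnessed by a finite `K₀ ⊆ G` and
`n` such that every finite nonempty `F ⊆ X` has `|F \ k·F| ≥ |F|/n` for some `k ∈ K₀`,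
then `X` has a paradoxical decomposition with respect to `K = (K₀ ∪ K₀⁻¹ ∪ {1})^{n₁}`,
where `(1 + 1/n)^{n₁} ≥ 3`. -/
theorem paradoxical_of_not_folner {G X : Type*} [Group G] [MulAction G X]
    (K₀ : Finset G) (n n₁ : ℕ) (hn : 0 < n)
    (hn₁ : 3 * n ^ n₁ ≤ (n + 1) ^ n₁)
    (hfol : ∀ F : Set X, F.Finite → F.Nonempty →
        ∃ k ∈ K₀, F.ncard ≤ n * (F \ k • F).ncard) :
    ∃ A B : G → Set X,
      ParadoxicalDecomposition (((K₀ : Set G) ∪ (K₀ : Set G)⁻¹ ∪ {1}) ^ n₁) A B := by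
  classical
  have hdouble (F : Finset X) : 2 * F.card ≤ ((K₀ ∪ {1}) ^ n₁ • F).card := by
    have hgrow := succ_pow_mul_card_le_pow_mul_card_pow_smul
      (succ_mul_card_le_mul_card_smul hfol) n₁ F
    have htriple : n ^ n₁ * (3 * F.card) ≤ n ^ n₁ * ((K₀ ∪ {1}) ^ n₁ • F).card :=
      calc n ^ n₁ * (3 * F.card) = 3 * n ^ n₁ * F.card := by ring
        _ ≤ (n + 1) ^ n₁ * F.card := Nat.mul_le_mul_right _ hn₁
        _ ≤ _ := hgrow
    have := Nat.le_of_mul_le_mul_left htriple (pow_pos hn n₁)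
    omega
  obtain ⟨h, hh, hmove⟩ := exists_bijective_smul_of_two_mul_card_le
    (Finset.one_mem_pow (Finset.mem_union_right _ (Finset.mem_singleton_self 1))) hdouble
  have hK : (↑((K₀ ∪ {1}) ^ n₁) : Set G) ⊆ (↑K₀ ∪ (↑K₀)⁻¹ ∪ {1}) ^ n₁ := by
    rw [Finset.coe_pow, Finset.coe_union, Finset.coe_singleton]
    exact Set.pow_subset_pow_left (Set.union_subset_union_left _ Set.subset_union_left)
  refine ParadoxicalDecomposition.exists_of_bijective hh fun p => ?_
  obtain ⟨k, hk, hkp⟩ := hmove p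
  exact ⟨k, hK hk, hkp⟩
end

section
/- Let G be a group, K ⊆ G a finite subset, and H = ⟨K⟩ the subgroup generated by K. Suppose that for every m ∈ ℕ (with m ≥ 1) there exists a finite nonempty set F_m ⊆ G such that |xF_m \ F_m| ≤ |F_m|/m for all x ∈ K. Then for every n ≥ 1 there exists a finite nonempty set E ⊆ H with |KE \ E| ≤ |E|/n; that is, H has Følner sets with respect to K. -/
/-!
Split a Følner set `F` of `G` along the right cosets `Ht` of `H = ⟨K⟩`. Left multiplication by
`x ∈ K` preserves each coset, so the boundary `xF \ F` splits into the boundaries of the pieces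
`F ∩ Ht`; by pigeonhole some piece has relative boundary no larger than that of `F`, and its right
translate by `t⁻¹` is a Følner set contained in `H`.
-/

open Pointwise Finset MulOpposite

theorem Finset.mul_sum_le_of_forall_mul_card_add_one_mul_le {ι : Type*} {s : Finset ι} {a : ι → ℕ}
    {n N : ℕ} (h : ∀ i ∈ s, n * (#s + 1) * a i ≤ N) : n * ∑ i ∈ s, a i ≤ N := by
  have key : (#s + 1) * (n * ∑ i ∈ s, a i) ≤ (#s + 1) * N :=
    calc (#s + 1) * (n * ∑ i ∈ s, a i) = ∑ i ∈ s, n * (#s + 1) * a i := by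
          rw [mul_sum, mul_sum]; ring_nf
      _ ≤ #s * N := by simpa using sum_le_sum h
      _ ≤ (#s + 1) * N := by gcongr; omega
  exact Nat.le_of_mul_le_mul_left key (Nat.succ_pos _)

namespace Finset

variable {G : Type*} [Group G] [DecidableEq G]

theorem card_mul_sdiff_le_sum_card_smul_sdiff (K A : Finset G) :
    #((K * A) \ A) ≤ ∑ x ∈ K, #(x • A \ A) := by
  refine (card_le_card ?_).trans card_biUnion_le
  intro y
  simp only [mem_sdiff, mem_biUnion, mem_mul]
  rintro ⟨⟨x, hx, a, ha, rfl⟩, hyA⟩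
  exact ⟨x, hx, smul_mem_smul_finset ha, hyA⟩

theorem card_mul_op_smul_sdiff (K B : Finset G) (t : G) :
    #((K * op t • B) \ op t • B) = #((K * B) \ B) := by
  rw [mul_smul_comm, ← smul_finset_sdiff, card_smul_finset]

theorem card_smul_sdiff_eq_sum_fiberwise {β : Type*} [DecidableEq β] {f : G → β} {x : G}
    (hx : ∀ y, f (x * y) = f y) (A : Finset G) :
    #(x • A \ A) = ∑ c ∈ A.image f, #(x • {a ∈ A | f a = c} \ {a ∈ A | f a = c}) := by
  refine (card_eq_sum_card_fiberwise (f := f) ?_).trans (sum_congr rfl fun c _ => congrArg card ?_)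
  · intro y hy
    obtain ⟨a, ha, rfl⟩ := mem_smul_finset.mp (mem_sdiff.mp hy).1
    simpa [hx] using mem_image_of_mem f ha
  · ext y
    simp only [mem_filter, mem_sdiff, mem_smul_finset, smul_eq_mul]
    constructor
    · rintro ⟨⟨⟨a, ha, rfl⟩, hyA⟩, rfl⟩
      exact ⟨⟨a, ⟨ha, (hx a).symm⟩, rfl⟩, fun h => hyA h.1⟩
    · rintro ⟨⟨a, ⟨ha, rfl⟩, rfl⟩, hy⟩
      exact ⟨⟨⟨a, ha, rfl⟩, fun h => hy ⟨h, hx a⟩⟩, hx a⟩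

theorem exists_fiber_mul_sum_card_smul_sdiff_le {β : Type*} [DecidableEq β] {f : G → β}
    {K A : Finset G} (hf : ∀ x ∈ K, ∀ y, f (x * y) = f y) (hA : A.Nonempty) {n : ℕ}
    (h : n * ∑ x ∈ K, #(x • A \ A) ≤ #A) :
    ∃ a ∈ A, n * ∑ x ∈ K, #(x • {b ∈ A | f b = f a} \ {b ∈ A | f b = f a}) ≤
      #{b ∈ A | f b = f a} := by
  have hsum : ∑ c ∈ A.image f, n * ∑ x ∈ K, #(x • {b ∈ A | f b = c} \ {b ∈ A | f b = c}) ≤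
      ∑ c ∈ A.image f, #{b ∈ A | f b = c} :=
    calc _ = n * ∑ x ∈ K, #(x • A \ A) := by
          rw [← mul_sum, sum_comm]
          exact congrArg _ <| sum_congr rfl fun x hx =>
            (card_smul_sdiff_eq_sum_fiberwise (hf x hx) A).symm
      _ ≤ #A := h
      _ = _ := card_eq_sum_card_fiberwise fun a ha => mem_image_of_mem f ha
  obtain ⟨c, hc, hle⟩ := exists_le_of_sum_le (hA.image f) hsum
  obtain ⟨a, ha, rfl⟩ := mem_image.mp hc
  exact ⟨a, ha, hle⟩

theorem exists_subset_closure_mul_card_mul_sdiff_le (K A : Finset G) (hA : A.Nonempty) {n : ℕ}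
    (h : n * ∑ x ∈ K, #(x • A \ A) ≤ #A) :
    ∃ E : Finset G, E.Nonempty ∧ (E : Set G) ⊆ Subgroup.closure (K : Set G) ∧
      n * #((K * E) \ E) ≤ #E := by
  classical
  set H := Subgroup.closure (K : Set G)
  let f : G → Quotient (QuotientGroup.rightRel H) := Quotient.mk _
  have hf : ∀ x ∈ K, ∀ y, f (x * y) = f y := fun x hx y =>
    Quotient.sound <| QuotientGroup.rightRel_apply.mpr <| by
      simpa using H.inv_mem (Subgroup.subset_closure hx)
  obtain ⟨t, ht, hB⟩ := exists_fiber_mul_sum_card_smul_sdiff_le hf hA h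
  set B := {b ∈ A | f b = f t}
  refine ⟨op t⁻¹ • B, ⟨t * t⁻¹, smul_mem_smul_finset (mem_filter.mpr ⟨ht, rfl⟩)⟩, ?_, ?_⟩
  · intro y hy
    obtain ⟨b, hb, rfl⟩ := mem_smul_finset.mp hy
    exact QuotientGroup.rightRel_apply.mp (Quotient.exact (mem_filter.mp hb).2.symm)
  · calc n * #((K * op t⁻¹ • B) \ op t⁻¹ • B) = n * #((K * B) \ B) := by
          rw [card_mul_op_smul_sdiff]
      _ ≤ n * ∑ x ∈ K, #(x • B \ B) := by gcongr; exact card_mul_sdiff_le_sum_card_smul_sdiff K B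
      _ ≤ #B := hB
      _ = #(op t⁻¹ • B) := (card_smul_finset _ _).symm

end Finset

/-- If for every `m ≥ 1` there is a finite nonempty `F_m ⊆ G` with `|xF_m \ F_m| ≤ |F_m|/m`
for all `x ∈ K`, then for every `n ≥ 1` the subgroup `H = ⟨K⟩` contains a finite nonempty
`E` with `|KE \ E| ≤ |E|/n`; i.e. `H` has Følner sets with respect to `K`. -/
theorem folner_sets_in_generated_subgroup {G : Type*} [Group G] (K : Finset G)
    (hfol : ∀ m : ℕ, 1 ≤ m → ∃ F : Set G, F.Finite ∧ F.Nonempty ∧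
        ∀ x ∈ K, m * (x • F \ F).ncard ≤ F.ncard) :
    ∀ n : ℕ, 1 ≤ n → ∃ E : Set G, E.Finite ∧ E.Nonempty ∧
      E ⊆ (Subgroup.closure (K : Set G) : Set G) ∧
      n * (((K : Set G) * E) \ E).ncard ≤ E.ncard := by
  classical
  intro n hn
  -- `#K + 1` rather than `#K`, so that the index is positive even when `K = ∅`
  obtain ⟨F, hF, hFne, hFK⟩ := hfol (n * (#K + 1)) (Nat.mul_pos hn (Nat.succ_pos _))
  obtain ⟨A, rfl⟩ := hF.exists_finset_coe
  have hAK : ∀ x ∈ K, n * (#K + 1) * #(x • A \ A) ≤ #A := by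
    simpa only [← coe_smul_finset, ← coe_sdiff, Set.ncard_coe_finset] using hFK
  obtain ⟨E, hE, hEH, hEK⟩ := exists_subset_closure_mul_card_mul_sdiff_le K A
    (coe_nonempty.mp hFne) (mul_sum_le_of_forall_mul_card_add_one_mul_le hAK)
  refine ⟨E, E.finite_toSet, hE, hEH, ?_⟩
  rwa [← coe_mul, ← coe_sdiff, Set.ncard_coe_finset, Set.ncard_coe_finset]
end

section
/- Let G be a group acting on a set X, and suppose there exist a nontrivial partition X = X₁ ⊔ X₂ and bijections γ₁ : X₁ → X, γ₂ : X₂ → X, each piecewise given by the action of finitely many group elements. Then the G-space (G, X) does not satisfy the Følner condition: there exist a finite R ⊆ G and n ∈ ℕ such that every finite nonempty F ⊆ X satisfies |∂_R F| ≥ |F|/n. -/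
open Pointwise

/-!
Let `γᵢ` be given on `Xᵢ` by elements of the finite set `Sᵢ` and put `R = S₁ ∪ S₂`. For finite
`F`, the preimages `γ₁⁻¹ F ∩ X₁` and `γ₂⁻¹ F ∩ X₂` are disjoint and each has `|F|` points, so at
least `|F|` of their points lie outside `F`. Each of those is moved into `F` by an element of `R`,
hence lies in `∂_R F`, and `|F| ≤ |∂_R F|`.
-/

namespace Set

variable {α β : Type*}

theorem BijOn.ncard_inter_preimage {f : α → β} {s : Set α} {t : Set β} (hf : BijOn f s t)
    (F : Set β) : (s ∩ f ⁻¹' F).ncard = (t ∩ F).ncard := by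
  rw [← hf.image_eq, ← image_inter_preimage, (hf.injOn.mono inter_subset_left).ncard_image]

theorem InjOn.finite_inter_preimage {f : α → β} {s : Set α} (hf : InjOn f s) {F : Set β}
    (hF : F.Finite) : (s ∩ f ⁻¹' F).Finite :=
  Finite.of_finite_image (hF.subset (image_subset_iff.2 inter_subset_right))
    (hf.mono inter_subset_left)

theorem ncard_le_of_disjoint_of_sdiff_subset {A B F D : Set α} (hAB : Disjoint A B)
    (hA : A.Finite) (hB : B.Finite) (hF : F.Finite) (hD : D.Finite)
    (hAF : A.ncard = F.ncard) (hBF : B.ncard = F.ncard) (hsub : (A ∪ B) \ F ⊆ D) :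
    F.ncard ≤ D.ncard := by
  have hcover : (A ∪ B).ncard ≤ D.ncard + F.ncard :=
    calc (A ∪ B).ncard ≤ ((A ∪ B) \ F).ncard + F.ncard := ncard_le_ncard_sdiff_add_ncard _ _ hF
      _ ≤ D.ncard + F.ncard := Nat.add_le_add_right (ncard_le_ncard hsub hD) _
  rw [ncard_union_eq hAB hA hB, hAF, hBF] at hcover
  omega

end Set

namespace MulAction

variable {G X : Type*} [Group G] [MulAction G X]

/-- The boundary `∂_R F` of `F` with respect to `R`. -/
def boundary (R : Finset G) (F : Set X) : Set X :=
  {x | x ∉ F ∧ ∃ g : G, (g ∈ R ∨ g⁻¹ ∈ R) ∧ g • x ∈ F}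

theorem boundary_mono {R R' : Finset G} (h : R ⊆ R') (F : Set X) :
    boundary R F ⊆ boundary R' F := by
  rintro x ⟨hxF, g, hg, hgx⟩
  exact ⟨hxF, g, hg.imp (@h _) (@h _), hgx⟩

theorem boundary_finite (R : Finset G) {F : Set X} (hF : F.Finite) : (boundary R F).Finite := by
  classical
  refine ((R ∪ R⁻¹).finite_toSet.biUnion fun g _ => hF.preimage
    (MulAction.injective g).injOn).subset ?_
  rintro x ⟨-, g, hg, hgx⟩
  simp only [Set.mem_iUnion]
  exact ⟨g, by simpa [Finset.mem_union, Finset.mem_inv] using hg, hgx⟩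

def IsPiecewiseSMul (S : Finset G) (γ : X → X) (s : Set X) : Prop :=
  ∀ x ∈ s, ∃ g ∈ S, γ x = g • x

theorem isPiecewiseSMul_of_iUnion_eq {S : Finset G} {P : G → Set X} {γ : X → X} {s : Set X}
    (hP : ⋃ g ∈ S, P g = s) (hγ : ∀ g ∈ S, ∀ x ∈ P g, γ x = g • x) :
    IsPiecewiseSMul S γ s := by
  intro x hx
  obtain ⟨g, hgS, hgx⟩ : ∃ g ∈ S, x ∈ P g := by simpa [← hP] using hx
  exact ⟨g, hgS, hγ g hgS x hgx⟩

theorem IsPiecewiseSMul.inter_preimage_sdiff_subset_boundary {S : Finset G} {γ : X → X}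
    {s : Set X} (hγ : IsPiecewiseSMul S γ s) (F : Set X) :
    (s ∩ γ ⁻¹' F) \ F ⊆ boundary S F := by
  rintro x ⟨⟨hxs, hγx⟩, hxF⟩
  obtain ⟨g, hgS, hg⟩ := hγ x hxs
  exact ⟨hxF, g, Or.inl hgS, hg ▸ hγx⟩

theorem ncard_le_ncard_boundary {X₁ X₂ : Set X} (hd : Disjoint X₁ X₂) {γ₁ γ₂ : X → X}
    (hb1 : Set.BijOn γ₁ X₁ Set.univ) (hb2 : Set.BijOn γ₂ X₂ Set.univ) {S₁ S₂ : Finset G}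
    (hγ₁ : IsPiecewiseSMul S₁ γ₁ X₁) (hγ₂ : IsPiecewiseSMul S₂ γ₂ X₂) [DecidableEq G]
    {F : Set X} (hF : F.Finite) : F.ncard ≤ (boundary (S₁ ∪ S₂) F).ncard := by
  refine Set.ncard_le_of_disjoint_of_sdiff_subset
    (hd.mono Set.inter_subset_left Set.inter_subset_left)
    (hb1.injOn.finite_inter_preimage hF) (hb2.injOn.finite_inter_preimage hF) hF
    (boundary_finite _ hF) (by simpa using hb1.ncard_inter_preimage F)
    (by simpa using hb2.ncard_inter_preimage F) ?_
  rw [Set.union_sdiff_distrib]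
  exact Set.union_subset
    ((hγ₁.inter_preimage_sdiff_subset_boundary F).trans (boundary_mono Finset.subset_union_left F))
    ((hγ₂.inter_preimage_sdiff_subset_boundary F).trans (boundary_mono Finset.subset_union_right F))

end MulAction

theorem not_folner_of_doubling_general {G X : Type*} [Group G] [MulAction G X]
    (X₁ X₂ : Set X) (hd : Disjoint X₁ X₂)
    (γ₁ γ₂ : X → X)
    (hb1 : Set.BijOn γ₁ X₁ Set.univ) (hb2 : Set.BijOn γ₂ X₂ Set.univ)
    (hp1 : ∃ (S : Finset G) (P : G → Set X), (⋃ g ∈ S, P g) = X₁ ∧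
        ∀ g ∈ S, ∀ x ∈ P g, γ₁ x = g • x)
    (hp2 : ∃ (S : Finset G) (P : G → Set X), (⋃ g ∈ S, P g) = X₂ ∧
        ∀ g ∈ S, ∀ x ∈ P g, γ₂ x = g • x) :
    ∃ (R : Finset G) (n : ℕ), 0 < n ∧ ∀ F : Set X, F.Finite → F.Nonempty →
      F.ncard ≤ n * {x | x ∉ F ∧ ∃ g : G, (g ∈ R ∨ g⁻¹ ∈ R) ∧ g • x ∈ F}.ncard := by
  classical
  obtain ⟨S₁, P₁, hP₁, hγ₁⟩ := hp1
  obtain ⟨S₂, P₂, hP₂, hγ₂⟩ := hp2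
  refine ⟨S₁ ∪ S₂, 1, one_pos, fun F hF _ => ?_⟩
  rw [one_mul]
  exact MulAction.ncard_le_ncard_boundary hd hb1 hb2
    (MulAction.isPiecewiseSMul_of_iUnion_eq hP₁ hγ₁)
    (MulAction.isPiecewiseSMul_of_iUnion_eq hP₂ hγ₂) hF

/-- If there is a nontrivial partition `X = X₁ ⊔ X₂` with bijections `γᵢ : Xᵢ → X`,
each piecewise given by the action of finitely many group elements, then the `G`-space
`X` does not satisfy the Følner condition: for some finite `R ⊆ G` and `n`, every
finite nonempty `F ⊆ X` satisfies `|∂_R F| ≥ |F|/n`. -/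
theorem not_folner_of_doubling {G X : Type*} [Group G] [MulAction G X]
    (X₁ X₂ : Set X) (h1 : X₁.Nonempty) (h2 : X₂.Nonempty)
    (hu : X₁ ∪ X₂ = Set.univ) (hd : Disjoint X₁ X₂)
    (γ₁ γ₂ : X → X)
    (hb1 : Set.BijOn γ₁ X₁ Set.univ) (hb2 : Set.BijOn γ₂ X₂ Set.univ)
    (hp1 : ∃ (S : Finset G) (P : G → Set X), (⋃ g ∈ S, P g) = X₁ ∧
        ∀ g ∈ S, ∀ x ∈ P g, γ₁ x = g • x)
    (hp2 : ∃ (S : Finset G) (P : G → Set X), (⋃ g ∈ S, P g) = X₂ ∧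
        ∀ g ∈ S, ∀ x ∈ P g, γ₂ x = g • x) :
    ∃ (R : Finset G) (n : ℕ), 0 < n ∧ ∀ F : Set X, F.Finite → F.Nonempty →
      F.ncard ≤ n * {x | x ∉ F ∧ ∃ g : G, (g ∈ R ∨ g⁻¹ ∈ R) ∧ g • x ∈ F}.ncard :=
  not_folner_of_doubling_general X₁ X₂ hd γ₁ γ₂ hb1 hb2 hp1 hp2
end

section
/- Let G be a group which does not satisfy the Følner condition (for its left action on itself). Then G admits a paradoxical decomposition: there exist a finite K ⊆ G and families (A_k)_{k∈K}, (B_k)_{k∈K} of subsets of G with G = ⊔_{k∈K} A_k = ⊔_{k∈K} B_k = (⊔_{k∈K} kA_k) ⊔ (⊔_{k∈K} kB_k). Moreover K can be taken of the form (K₀ ∪ K₀⁻¹ ∪ {1})^{n₁} where K₀ and n witness the failure of the Følner condition and (1+1/n)^{n₁} ≥ 3. -/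
open Pointwise Function

/-!
If `G` fails the Følner condition with witnesses `K₀` and `n`, then `S = K₀ ∪ K₀⁻¹ ∪ {1}`
satisfies `|S F| ≥ (1 + 1/n) |F|` for every finite nonempty `F`, so `K = S ^ n₁` triples
finite sets. By Hall's marriage theorem (for infinite families of finite sets) there is an
injection `f : G × Bool → G` with `f (x, b) ∈ K x`; together with `y ↦ (k₀⁻¹ y, true)` for some
`k₀ ∈ K`, the relational Schröder–Bernstein theorem turns it into a bijection `h : G × Bool → G` with `h (x, b) ∈ K x`.
Sorting `x` by the element `k ∈ K` with `h (x, true) = k x`, resp. `h (x, false) = k x`, gives the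
pieces `A k`, resp. `B k`.
-/

section

variable {G X : Type*} [Group G] [MulAction G X]

theorem ncard_add_ncard_sdiff_smul_le {S : Set G} {F : Set X} {k : G} (hS : S.Finite)
    (hF : F.Finite) (h1 : (1 : G) ∈ S) (hk : k ∈ S) :
    F.ncard + (F \ k • F).ncard ≤ (S • F).ncard := by
  have hsub : F ∪ k • F ⊆ S • F := by
    rintro x (hx | ⟨y, hy, rfl⟩)
    · simpa using Set.smul_mem_smul h1 hx
    · exact Set.smul_mem_smul hk hy
  calc F.ncard + (F \ k • F).ncard = (F ∪ k • F).ncard := by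
        rw [← Set.ncard_smul_set k F, add_comm, Set.ncard_sdiff_add_ncard F (k • F) hF
          hF.smul_set, Set.union_comm]
    _ ≤ (S • F).ncard := Set.ncard_le_ncard hsub (hS.smul hF)

theorem pow_mul_ncard_le_pow_mul_ncard_pow_smul {S : Set G} {a b : ℕ} (hS : S.Finite)
    (hSne : S.Nonempty)
    (hgrowth : ∀ F : Set X, F.Finite → F.Nonempty → a * F.ncard ≤ b * (S • F).ncard)
    (j : ℕ) {F : Set X} (hF : F.Finite) (hFne : F.Nonempty) :
    a ^ j * F.ncard ≤ b ^ j * (S ^ j • F).ncard := by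
  induction j generalizing F with
  | zero => simp
  | succ j ih =>
    calc a ^ (j + 1) * F.ncard = a ^ j * (a * F.ncard) := by ring
      _ ≤ a ^ j * (b * (S • F).ncard) := Nat.mul_le_mul_left _ (hgrowth F hF hFne)
      _ = b * (a ^ j * (S • F).ncard) := by ring
      _ ≤ b * (b ^ j * (S ^ j • S • F).ncard) :=
        Nat.mul_le_mul_left _ (ih (hS.smul hF) (hSne.smul hFne))
      _ = b ^ (j + 1) * (S ^ (j + 1) • F).ncard := by rw [pow_succ S, mul_smul]; ring

theorem exists_injective_smul_of_two_mul_ncard_le {K : Set G} (hK : K.Finite)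
    (hdouble : ∀ F : Set X, F.Finite → 2 * F.ncard ≤ (K • F).ncard) :
    ∃ f : X × Bool → X, Injective f ∧ ∀ p, ∃ k ∈ K, k • p.1 = f p := by
  classical
  let t : X × Bool → Finset X := fun p => hK.toFinset.image (· • p.1)
  suffices hall : ∀ s : Finset (X × Bool), s.card ≤ (s.biUnion t).card by
    obtain ⟨f, hf, hft⟩ := (Finset.all_card_le_biUnion_card_iff_exists_injective t).1 hall
    refine ⟨f, hf, fun p => ?_⟩
    simpa [t] using hft p
  intro s
  let F : Finset X := s.image Prod.fst
  have hKF : K • (F : Set X) ⊆ s.biUnion t := by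
    rintro _ ⟨k, hk, x, hx, rfl⟩
    obtain ⟨p, hp, rfl⟩ := Finset.mem_image.1 hx
    exact Finset.mem_biUnion.2 ⟨p, hp, Finset.mem_image.2 ⟨k, hK.mem_toFinset.2 hk, rfl⟩⟩
  calc s.card ≤ (F ×ˢ (Finset.univ : Finset Bool)).card :=
        Finset.card_le_card fun p hp =>
          Finset.mem_product.2 ⟨Finset.mem_image_of_mem _ hp, Finset.mem_univ _⟩
    _ = 2 * F.card := by simp [mul_comm]
    _ = 2 * (F : Set X).ncard := by rw [Set.ncard_coe_finset]
    _ ≤ (K • (F : Set X)).ncard := hdouble _ F.finite_toSet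
    _ ≤ (s.biUnion t).card := by
      rw [← Set.ncard_coe_finset]
      exact Set.ncard_le_ncard hKF (s.biUnion t).finite_toSet

theorem exists_paradoxicalDecomposition_of_bijective {K : Set G} {h : X × Bool → X}
    (hh : Bijective h) (hK : ∀ p, ∃ k ∈ K, k • p.1 = h p) :
    ∃ A B : G → Set X, ParadoxicalDecomposition K A B := by
  choose κ hκK hκ using hK
  let C : Bool → G → Set X := fun b k => {x | κ (x, b) = k}
  have hC : ∀ (b : Bool) (k : G), (if b then k • C true k else k • C false k) = k • C b k := by
    intro b k
    cases b <;> rfl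
  have piece : ∀ b x, ∃! k : G, k ∈ K ∧ x ∈ C b k :=
    fun b x => ⟨κ (x, b), ⟨hκK _, rfl⟩, fun k hk => hk.2.symm⟩
  refine ⟨C true, C false, piece true, piece false, fun x => ?_⟩
  obtain ⟨⟨y, b⟩, rfl⟩ := hh.2 x
  refine ⟨(κ (y, b), b), ⟨hκK _, ?_⟩, ?_⟩
  · rw [hC, ← hκ]
    exact Set.smul_mem_smul_set rfl
  · rintro ⟨k, b'⟩ ⟨-, hx⟩
    rw [hC] at hx
    obtain ⟨z, hzk : κ (z, b') = k, hz⟩ := Set.mem_smul_set.1 hx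
    have hzy : (z, b') = (y, b) := hh.1 (by rw [← hκ (z, b'), hzk]; exact hz)
    obtain ⟨rfl, rfl⟩ := Prod.mk.inj hzy
    rw [hzk]

theorem exists_paradoxicalDecomposition_of_two_mul_ncard_le {K : Set G} (hK : K.Finite)
    (hKne : K.Nonempty) (hdouble : ∀ F : Set X, F.Finite → 2 * F.ncard ≤ (K • F).ncard) :
    ∃ A B : G → Set X, ParadoxicalDecomposition K A B := by
  obtain ⟨f, hf, hfK⟩ := exists_injective_smul_of_two_mul_ncard_le hK hdouble
  obtain ⟨k₀, hk₀⟩ := hKne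
  have hg : Injective fun x : X => (k₀⁻¹ • x, true) :=
    fun x y hxy => by simpa using congrArg Prod.fst hxy
  obtain ⟨h, hh, hhK⟩ := Embedding.schroeder_bernstein_of_rel hf hg
    (fun p x => ∃ k ∈ K, k • p.1 = x) hfK fun x => ⟨k₀, hk₀, smul_inv_smul k₀ x⟩
  exact exists_paradoxicalDecomposition_of_bijective hh hhK

end

/-- A group `G` failing the Følner condition (witnessed by a finite `K₀` and `n`) admits
a paradoxical decomposition with respect to `K = (K₀ ∪ K₀⁻¹ ∪ {1})^{n₁}`, where
`(1+1/n)^{n₁} ≥ 3`. -/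
theorem group_paradoxical_of_not_folner {G : Type*} [Group G]
    (K₀ : Finset G) (n n₁ : ℕ) (hn : 0 < n)
    (hn₁ : 3 * n ^ n₁ ≤ (n + 1) ^ n₁)
    (hfol : ∀ F : Set G, F.Finite → F.Nonempty →
        ∃ k ∈ K₀, F.ncard ≤ n * (F \ k • F).ncard) :
    ∃ A B : G → Set G,
      ParadoxicalDecomposition (((K₀ : Set G) ∪ (K₀ : Set G)⁻¹ ∪ {1}) ^ n₁) A B := by
  classical
  set S : Set G := (K₀ : Set G) ∪ (K₀ : Set G)⁻¹ ∪ {1}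
  have hS : S.Finite := (K₀.finite_toSet.union K₀.finite_toSet.inv).union (Set.finite_singleton 1)
  have h1S : (1 : G) ∈ S := Or.inr rfl
  have hgrowth : ∀ F : Set G, F.Finite → F.Nonempty → (n + 1) * F.ncard ≤ n * (S • F).ncard := by
    intro F hF hFne
    obtain ⟨k, hk, hcard⟩ := hfol F hF hFne
    have := ncard_add_ncard_sdiff_smul_le hS hF h1S (Or.inl (Or.inl hk))
    nlinarith
  have hSpow : (S ^ n₁).Finite := by
    simpa [S] using ((K₀ ∪ K₀⁻¹ ∪ {1}) ^ n₁ : Finset G).finite_toSet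
  refine exists_paradoxicalDecomposition_of_two_mul_ncard_le hSpow ⟨1, Set.one_mem_pow h1S⟩
    fun F hF => ?_
  rcases F.eq_empty_or_nonempty with rfl | hFne
  · simp
  have htriple := pow_mul_ncard_le_pow_mul_ncard_pow_smul hS ⟨1, h1S⟩ hgrowth n₁ hF hFne
  refine Nat.le_of_mul_le_mul_left ?_ (pow_pos hn n₁)
  calc n ^ n₁ * (2 * F.ncard) ≤ n ^ n₁ * (3 * F.ncard) := by gcongr; omega
    _ = 3 * n ^ n₁ * F.ncard := by ring
    _ ≤ (n + 1) ^ n₁ * F.ncard := Nat.mul_le_mul_right _ hn₁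
    _ ≤ n ^ n₁ * (S ^ n₁ • F).ncard := htriple
end
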